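/- Let D be a division ring and A, B be n × n matrices over D. The product A ⬝ B is invertible if and only if both A and B are invertible. Equivalently, A ⬝ B is singular if and only if A is singular or B is singular. -/

import Mathlib

private lemma matrix_mul_eq_one_comm (D : Type*) [DivisionRing D] {n : ℕ}
    {A B : Matrix (Fin n) (Fin n) D} (h : A * B = 1) : B * A = 1 := by
  have h1 : Matrix.toLinearMapRight' (A * B) = LinearMap.id (R := D) (M := Fin n → D) := by
    rw [h, Matrix.toLinearMapRight'_one]
  have h2 : (Matrix.toLinearMapRight' B : Module.End D (Fin n → D)) *
      (Matrix.toLinearMapRight' A : Module.End D (Fin n → D)) = 1 := by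
    rw [Matrix.toLinearMapRight'_mul] at h1
    exact h1
  have h3 := mul_eq_one_symm h2
  have h4 : Matrix.toLinearMapRight' (B * A) = Matrix.toLinearMapRight' (1 : Matrix (Fin n) (Fin n) D) := by
    rw [Matrix.toLinearMapRight'_mul, Matrix.toLinearMapRight'_one]
    exact h3
  exact Matrix.toLinearMapRight'.injective h4

theorem stmt_7 (D : Type*) [DivisionRing D] {n : ℕ}
    (A B : Matrix (Fin n) (Fin n) D) :
    IsUnit (A * B) ↔ IsUnit A ∧ IsUnit B := by
  constructor
  · rintro ⟨⟨u, v, huv, hvu⟩, hu⟩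
    dsimp at hu; subst hu
    have h1 : A * (B * v) = 1 := by rw [← mul_assoc]; exact huv
    have h2 : (v * A) * B = 1 := by rw [mul_assoc]; exact hvu
    exact ⟨⟨⟨A, B * v, h1, matrix_mul_eq_one_comm D h1⟩, rfl⟩,
      ⟨⟨B, v * A, matrix_mul_eq_one_comm D h2, h2⟩, rfl⟩⟩
  · rintro ⟨hA, hB⟩
    exact hA.mul hB
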